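/- Let k be a field, V a k-vector space, and f, g ∈ End_k(V) with f² = f, g² = g and f∘g = g∘f. Then R := f⊗g ∈ End_k(V⊗V) is a solution of the Hopf equation (R¹²R²³ = R²³R¹³R¹²). -/

import Mathlib

open TensorProduct LinearMap

section HopfEq

variable (k V : Type*) [Field k] [AddCommGroup V] [Module k V]

/-- The flip map `τ : V ⊗ V → V ⊗ V`, `τ(v ⊗ w) = w ⊗ v`. -/
noncomputable def flipMap : V ⊗[k] V →ₗ[k] V ⊗[k] V :=
  (TensorProduct.comm k V V).toLinearMap

variable {k V}

/-- `R¹² = R ⊗ I` as an endomorphism of `V ⊗ V ⊗ V`. -/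
noncomputable def map12 (R : V ⊗[k] V →ₗ[k] V ⊗[k] V) :
    V ⊗[k] (V ⊗[k] V) →ₗ[k] V ⊗[k] (V ⊗[k] V) :=
  (TensorProduct.assoc k V V V).toLinearMap ∘ₗ R.rTensor V ∘ₗ
    (TensorProduct.assoc k V V V).symm.toLinearMap

/-- `R²³ = I ⊗ R` as an endomorphism of `V ⊗ V ⊗ V`. -/
noncomputable def map23 (R : V ⊗[k] V →ₗ[k] V ⊗[k] V) :
    V ⊗[k] (V ⊗[k] V) →ₗ[k] V ⊗[k] (V ⊗[k] V) :=
  R.lTensor V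

/-- `R¹³ = (I ⊗ τ)(R ⊗ I)(I ⊗ τ)` as an endomorphism of `V ⊗ V ⊗ V`. -/
noncomputable def map13 (R : V ⊗[k] V →ₗ[k] V ⊗[k] V) :
    V ⊗[k] (V ⊗[k] V) →ₗ[k] V ⊗[k] (V ⊗[k] V) :=
  (flipMap k V).lTensor V ∘ₗ map12 R ∘ₗ (flipMap k V).lTensor V

/-- `R` is a solution of the Hopf equation: `R¹²R²³ = R²³R¹³R¹²`. -/
def IsHopfSolution (R : V ⊗[k] V →ₗ[k] V ⊗[k] V) : Prop :=
  map12 R ∘ₗ map23 R = map23 R ∘ₗ map13 R ∘ₗ map12 R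

/-- `R` is a solution of the pentagonal equation: `R¹²R¹³R²³ = R²³R¹²`. -/
def IsPentagonSolution (R : V ⊗[k] V →ₗ[k] V ⊗[k] V) : Prop :=
  map12 R ∘ₗ map13 R ∘ₗ map23 R = map23 R ∘ₗ map12 R

end HopfEq

/-! For `R = f ⊗ g` each of `R¹²`, `R²³`, `R¹³` is again a triple tensor product of maps, so
both sides of the Hopf equation collapse factorwise: the left side to `f ⊗ gf ⊗ g`, the right
side to `f² ⊗ fg ⊗ g²`. Idempotence and commutativity make these equal. -/

section TensorMap

variable {k V : Type*} [Field k] [AddCommGroup V] [Module k V] (f g : V →ₗ[k] V)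

theorem map12_map : map12 (map f g) = map f (map g id) := by
  ext x y z
  simp [map12]

theorem map23_map : map23 (map f g) = map id (map f g) := rfl

theorem map13_map : map13 (map f g) = map f (map id g) := by
  ext x y z
  simp [map13, map12, flipMap]

end TensorMap

theorem tensor_idempotents_isHopfSolution (k V : Type*) [Field k] [AddCommGroup V] [Module k V]
    (f g : V →ₗ[k] V) (hf : f ∘ₗ f = f) (hg : g ∘ₗ g = g) (hfg : f ∘ₗ g = g ∘ₗ f) :
    IsHopfSolution (TensorProduct.map f g) := by
  rw [IsHopfSolution, map12_map, map23_map, map13_map]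
  simp only [← map_comp, id_comp, comp_id]
  change map f (map (g ∘ₗ f) g) = map (f ∘ₗ f) (map (f ∘ₗ g) (g ∘ₗ g))
  rw [hf, hg, hfg]
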